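/- arXiv:1410.4101 — 4 statements merged into one kernel-verified Lean document; each statement's English description precedes it below -/
import Mathlib

section
/- If 1 < β₁ < β₂ ≤ 1.202, then |(β₂^8 − β₁^8)/(β₂^7 − β₁^7)| + |β₂^7 β₁^7 (β₂ − β₁)/(β₂^7 − β₁^7)| ≤ 2. -/
/-!
Both quotients are nonnegative, so after clearing the denominator `b2 ^ 7 - b1 ^ 7` and dividing
by `b2 - b1` the claim becomes `b2 ^ 7 * (1 + b1 ^ 7) ≤ (2 - b1) * S`, where
`S = ∑ i < 7, b2 ^ i * b1 ^ (6 - i)`. By AM-GM `S ≥ 7 * b1 ^ 3 * b2 ^ 3`, and bounding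
`b2 ^ 4 ≤ 1.202 ^ 4` leaves the one-variable inequality
`1.202 ^ 4 * (1 + x ^ 7) ≤ 7 * (2 - x) * x ^ 3` on `[1, 1.202]`, which is tight to within half a
percent at `x = 1.202`.
-/

open Finset

lemma const_mul_one_add_pow_seven_le {x : ℝ} (h1 : 1 ≤ x) (h2 : x ≤ 601 / 500) :
    (601 / 500 : ℝ) ^ 4 * (1 + x ^ 7) ≤ 7 * (2 - x) * x ^ 3 := by
  have ha : 0 ≤ x - 1 := by linarith
  have hb : 0 ≤ 601 / 500 - x := by linarith
  nlinarith [mul_nonneg ha hb, mul_nonneg (mul_nonneg ha hb) ha, mul_nonneg (mul_nonneg ha hb) hb,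
    pow_le_pow_left₀ (by linarith) h2 7]

lemma seven_mul_pow_three_mul_pow_three_le_geom_sum₂ {a b : ℝ} (ha : 0 ≤ a) (hb : 0 ≤ b) :
    7 * a ^ 3 * b ^ 3 ≤ ∑ i ∈ range 7, b ^ i * a ^ (7 - 1 - i) := by
  simp only [sum_range_succ, sum_range_zero]
  norm_num only
  nlinarith [sq_nonneg (a ^ 3 - b ^ 3), mul_nonneg (mul_nonneg ha hb) (sq_nonneg (a ^ 2 - b ^ 2)),
    mul_nonneg (mul_nonneg (sq_nonneg a) (sq_nonneg b)) (sq_nonneg (a - b))]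

lemma pow_seven_mul_one_add_pow_seven_le {b1 b2 : ℝ} (h1 : 1 ≤ b1) (h12 : b1 ≤ b2)
    (h2 : b2 ≤ 601 / 500) :
    b2 ^ 7 * (1 + b1 ^ 7) ≤ (2 - b1) * ∑ i ∈ range 7, b2 ^ i * b1 ^ (7 - 1 - i) := by
  have hb1 : 0 ≤ b1 := by linarith
  have hb2 : 0 ≤ b2 := by linarith
  calc b2 ^ 7 * (1 + b1 ^ 7) = b2 ^ 3 * (b2 ^ 4 * (1 + b1 ^ 7)) := by ring
    _ ≤ b2 ^ 3 * ((601 / 500) ^ 4 * (1 + b1 ^ 7)) := by gcongr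
    _ ≤ b2 ^ 3 * (7 * (2 - b1) * b1 ^ 3) := by
      gcongr ?_ * ?_
      exact const_mul_one_add_pow_seven_le h1 (h12.trans h2)
    _ = (2 - b1) * (7 * b1 ^ 3 * b2 ^ 3) := by ring
    _ ≤ (2 - b1) * ∑ i ∈ range 7, b2 ^ i * b1 ^ (7 - 1 - i) := by
      gcongr
      · linarith
      · exact seven_mul_pow_three_mul_pow_three_le_geom_sum₂ hb1 hb2

lemma pow_eight_sub_add_le_two_mul_pow_seven_sub {b1 b2 : ℝ} (h1 : 1 ≤ b1) (h12 : b1 ≤ b2)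
    (h2 : b2 ≤ 601 / 500) :
    b2 ^ 8 - b1 ^ 8 + b2 ^ 7 * b1 ^ 7 * (b2 - b1) ≤ 2 * (b2 ^ 7 - b1 ^ 7) := by
  have key := mul_le_mul_of_nonneg_left (pow_seven_mul_one_add_pow_seven_le h1 h12 h2)
    (sub_nonneg.2 h12)
  linear_combination key + (2 - b1) * geom_sum₂_mul b2 b1 7

theorem coeff_bound (b1 b2 : ℝ) (h1 : 1 < b1) (h12 : b1 < b2) (h2 : b2 ≤ 1.202) :
    |(b2 ^ 8 - b1 ^ 8) / (b2 ^ 7 - b1 ^ 7)| +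
      |b2 ^ 7 * b1 ^ 7 * (b2 - b1) / (b2 ^ 7 - b1 ^ 7)| ≤ 2 := by
  have h2' : b2 ≤ 601 / 500 := h2.trans_eq (by norm_num)
  have hb1 : 0 ≤ b1 := by linarith
  have hb2 : 0 ≤ b2 := by linarith
  have hd : 0 < b2 ^ 7 - b1 ^ 7 := sub_pos.2 (pow_lt_pow_left₀ h12 hb1 (by norm_num))
  have hn8 : 0 ≤ b2 ^ 8 - b1 ^ 8 := sub_nonneg.2 (pow_le_pow_left₀ hb1 h12.le 8)
  have hn : 0 ≤ b2 ^ 7 * b1 ^ 7 * (b2 - b1) := mul_nonneg (by positivity) (sub_nonneg.2 h12.le)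
  rw [abs_of_nonneg (div_nonneg hn8 hd.le), abs_of_nonneg (div_nonneg hn hd.le), ← add_div,
    div_le_iff₀ hd]
  exact pow_eight_sub_add_le_two_mul_pow_seven_sub h1.le h12.le h2'
end

section
/- Let P(x) = x^n + b_{n−1}x^{n−1} + ··· + b_0 be a real polynomial with Σ_{j=0}^{n−1} |b_j| ≤ 2. Suppose (u_j)_{j≤0} are reals with |u_j| ≤ 1 for all j ≤ 0. Then one can choose inductively, for each i ≥ 1, a sign a_i ∈ {−1, 1} and a real u_i ∈ [−1, 1] such that u_i = a_i − Σ_{k=0}^{n−1} b_k u_{i−n+k}. -/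
/-! If the `n` previous terms lie in `[-1, 1]`, the convolution `s = ∑ b k * v (i - n + k)` lies in
`[-2, 2]`, so the sign of `s` is a digit `a ∈ {-1, 1}` with `a - s ∈ [-1, 1]`. Choosing the digits
greedily in this way keeps every new term in `[-1, 1]`, by induction on the index. -/

open Finset

noncomputable def signDigit (s : ℝ) : ℝ := if 0 ≤ s then 1 else -1

lemma signDigit_eq_neg_one_or_eq_one (s : ℝ) : signDigit s = -1 ∨ signDigit s = 1 := by
  unfold signDigit; split_ifs <;> simp

lemma abs_signDigit_sub_le_one {s : ℝ} (hs : |s| ≤ 2) : |signDigit s - s| ≤ 1 := by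
  rw [abs_le] at hs ⊢
  unfold signDigit
  split_ifs <;> constructor <;> linarith

lemma abs_sum_mul_le_of_abs_le_one {ι : Type*} (s : Finset ι) (b x : ι → ℝ)
    (hx : ∀ k ∈ s, |x k| ≤ 1) : |∑ k ∈ s, b k * x k| ≤ ∑ k ∈ s, |b k| :=
  (abs_sum_le_sum_abs _ _).trans <| sum_le_sum fun k hk => by
    rw [abs_mul]
    exact mul_le_of_le_one_right (abs_nonneg _) (hx k hk)

noncomputable def greedyExpansion (n : ℕ) (b : ℕ → ℝ) (u : ℤ → ℝ) (i : ℤ) : ℝ :=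
  if i ≤ 0 then u i else
    let s := ∑ k ∈ (range n).attach, b k * greedyExpansion n b u (i - n + k)
    signDigit s - s
termination_by i.toNat
decreasing_by have := mem_range.1 k.2; omega

section greedyExpansion

variable (n : ℕ) (b : ℕ → ℝ) (u : ℤ → ℝ)

lemma greedyExpansion_of_nonpos {i : ℤ} (hi : i ≤ 0) : greedyExpansion n b u i = u i := by
  rw [greedyExpansion, if_pos hi]

lemma greedyExpansion_of_pos {i : ℤ} (hi : 0 < i) :
    greedyExpansion n b u i =
      signDigit (∑ k ∈ range n, b k * greedyExpansion n b u (i - n + k))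
        - ∑ k ∈ range n, b k * greedyExpansion n b u (i - n + k) := by
  rw [greedyExpansion, if_neg hi.not_ge,
    sum_attach (range n) fun k => b k * greedyExpansion n b u (i - n + k)]

lemma abs_greedyExpansion_le_one (hb : ∑ j ∈ range n, |b j| ≤ 2)
    (hu : ∀ j : ℤ, j ≤ 0 → |u j| ≤ 1) (i : ℤ) : |greedyExpansion n b u i| ≤ 1 := by
  suffices h : ∀ m : ℕ, ∀ i : ℤ, i ≤ m → |greedyExpansion n b u i| ≤ 1 from
    h _ i (Int.self_le_toNat i)
  intro m
  induction m with
  | zero => intro i hi; rw [greedyExpansion_of_nonpos n b u hi]; exact hu i hi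
  | succ m ih =>
    intro i hi
    rcases (show i ≤ m ∨ i = m + 1 by omega) with hi | rfl
    · exact ih i hi
    rw [greedyExpansion_of_pos n b u (by omega)]
    refine abs_signDigit_sub_le_one <| (abs_sum_mul_le_of_abs_le_one _ _ _ fun k hk => ?_).trans hb
    exact ih _ (by have := mem_range.1 hk; omega)

end greedyExpansion

theorem digit_selection (n : ℕ) (b : ℕ → ℝ)
    (hb : ∑ j ∈ Finset.range n, |b j| ≤ 2)
    (u : ℤ → ℝ) (hu : ∀ j : ℤ, j ≤ 0 → |u j| ≤ 1) :
    ∃ a : ℤ → ℝ, ∃ v : ℤ → ℝ,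
      (∀ j : ℤ, j ≤ 0 → v j = u j) ∧
      ∀ i : ℤ, 1 ≤ i →
        (a i = -1 ∨ a i = 1) ∧ |v i| ≤ 1 ∧
        v i = a i - ∑ k ∈ Finset.range n, b k * v (i - n + k) := by
  set v := greedyExpansion n b u
  refine ⟨fun i => signDigit (∑ k ∈ range n, b k * v (i - n + k)), v,
    fun j hj => greedyExpansion_of_nonpos n b u hj, fun i hi => ⟨?_, ?_, ?_⟩⟩
  · exact signDigit_eq_neg_one_or_eq_one _
  · exact abs_greedyExpansion_le_one n b u hb hu i
  · exact greedyExpansion_of_pos n b u hi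
end

section
/- Let β₁, β₂ > 1 be distinct real roots of a polynomial P with coefficients in {−1, 0, 1} and nonzero leading coefficient. Then there exist two distinct sequences (a_n), (b_n) ∈ {−1,1}^ℕ with a_1 ≠ b_1 such that Σ a_n β_i^{−n} = Σ b_n β_i^{−n} for both i = 1 and i = 2. -/
/-!
Split `2P = P₊ - P₋` with `P₊, P₋` having coefficients `±1`. If `P(β) = 0` with `β > 1`, the
coefficient string of `P`, read from the top and repeated forever, has `β`-expansion value
`(P(β) / β^(n+1)) / (1 - β^{-(n+1)}) = 0`; so the periodic `±1` sequences built from `P₊` and `P₋`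
have the same value at every root `β > 1` of `P`, and their first digits differ because the
leading coefficient is nonzero.
-/

open Finset

theorem tsum_eq_zero_of_shift_eq_mul {K : Type*} [Field K] [TopologicalSpace K]
    [IsTopologicalRing K] [T2Space K] {g : ℕ → K} {p : ℕ} {r : K}
    (hshift : ∀ j, g (j + p) = r * g j) (hr : r ≠ 1) (hblock : ∑ j ∈ range p, g j = 0) :
    ∑' j, g j = 0 := by
  by_cases hg : Summable g
  · have hfix : ∑' j, g j = r * ∑' j, g j :=
      calc ∑' j, g j = ∑' j, g (j + p) := by rw [← hg.sum_add_tsum_nat_add p, hblock, zero_add]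
        _ = r * ∑' j, g j := by rw [← tsum_mul_left]; exact tsum_congr hshift
    have : (1 - r) * ∑' j, g j = 0 := by rw [sub_mul, one_mul, ← hfix, sub_self]
    exact (mul_eq_zero.mp this).resolve_left (sub_ne_zero.mpr hr.symm)
  · exact tsum_eq_zero_of_not_summable hg

theorem summable_div_pow_succ_of_bounded {β : ℝ} (hβ : 1 < β) {f : ℕ → ℝ} {C : ℝ}
    (hf : ∀ j, |f j| ≤ C) : Summable fun j => f j / β ^ (j + 1) := by
  have hβ0 : 0 < β := one_pos.trans hβ
  have hgeom : Summable fun j => C * β⁻¹ * β⁻¹ ^ j :=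
    (summable_geometric_of_lt_one (by positivity) (inv_lt_one_of_one_lt₀ hβ)).mul_left _
  refine hgeom.of_norm_bounded fun j => ?_
  rw [Real.norm_eq_abs, abs_div, abs_of_pos (pow_pos hβ0 _), div_eq_mul_inv, ← inv_pow,
    mul_assoc, ← pow_succ']
  exact mul_le_mul_of_nonneg_right (hf j) (by positivity)

/-- The coefficient string `c n, c (n - 1), …, c 0` repeated periodically. -/
def periodicCoeffs (c : ℕ → ℝ) (n j : ℕ) : ℝ :=
  c (n - j % (n + 1))

theorem periodicCoeffs_add_period (c : ℕ → ℝ) (n j : ℕ) :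
    periodicCoeffs c n (j + (n + 1)) = periodicCoeffs c n j := by
  simp only [periodicCoeffs, Nat.add_mod_right]

theorem sum_periodicCoeffs_div_pow {β : ℝ} (hβ : β ≠ 0) (c : ℕ → ℝ) (n : ℕ) :
    ∑ j ∈ range (n + 1), periodicCoeffs c n j / β ^ (j + 1) =
      (∑ i ∈ range (n + 1), c i * β ^ i) / β ^ (n + 1) := by
  rw [sum_div, ← sum_range_reflect (fun i => c i * β ^ i / β ^ (n + 1))]
  refine sum_congr rfl fun j hj => ?_
  have hj : j < n + 1 := mem_range.mp hj
  rw [periodicCoeffs, Nat.mod_eq_of_lt hj, show n + 1 - 1 - j = n - j by omega,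
    show n + 1 = n - j + (j + 1) by omega, pow_add β (n - j)]
  field_simp

theorem tsum_periodicCoeffs_div_pow_eq_zero {β : ℝ} (hβ : 1 < β) {c : ℕ → ℝ} {n : ℕ}
    (hP : ∑ i ∈ range (n + 1), c i * β ^ i = 0) :
    ∑' j, periodicCoeffs c n j / β ^ (j + 1) = 0 := by
  have hβ0 : β ≠ 0 := by positivity
  refine tsum_eq_zero_of_shift_eq_mul (p := n + 1) (r := (β ^ (n + 1))⁻¹) (fun j => ?_)
    (inv_ne_one.mpr (one_lt_pow₀ hβ n.succ_ne_zero).ne')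
    (by rw [sum_periodicCoeffs_div_pow hβ0, hP, zero_div])
  rw [periodicCoeffs_add_period]
  field_simp
  ring

/-- The coefficients of `P₊` and `P₋` in `2P = P₊ - P₋`, as functions of the coefficient of `P`. -/
noncomputable def plusDigit (x : ℝ) : ℝ := if x = -1 then -1 else 1

noncomputable def minusDigit (x : ℝ) : ℝ := if x = 1 then -1 else 1

theorem plusDigit_eq (x : ℝ) : plusDigit x = -1 ∨ plusDigit x = 1 := by
  unfold plusDigit; split_ifs <;> simp

theorem minusDigit_eq (x : ℝ) : minusDigit x = -1 ∨ minusDigit x = 1 := by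
  unfold minusDigit; split_ifs <;> simp

theorem plusDigit_sub_minusDigit {x : ℝ} (hx : x = -1 ∨ x = 0 ∨ x = 1) :
    plusDigit x - minusDigit x = 2 * x := by
  rcases hx with rfl | rfl | rfl <;> norm_num [plusDigit, minusDigit]

theorem plusDigit_ne_minusDigit {x : ℝ} (hx : x = -1 ∨ x = 0 ∨ x = 1) (h0 : x ≠ 0) :
    plusDigit x ≠ minusDigit x := by
  rw [← sub_ne_zero, plusDigit_sub_minusDigit hx]
  exact mul_ne_zero two_ne_zero h0

theorem tsum_plusDigit_div_pow_eq {β : ℝ} (hβ : 1 < β) {d : ℕ → ℝ}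
    (hd : ∀ j, d j = -1 ∨ d j = 0 ∨ d j = 1) (hzero : ∑' j, d j / β ^ (j + 1) = 0) :
    ∑' j, plusDigit (d j) / β ^ (j + 1) = ∑' j, minusDigit (d j) / β ^ (j + 1) := by
  have hbound : ∀ y : ℝ, y = -1 ∨ y = 1 → |y| ≤ 1 := by
    rintro y (rfl | rfl) <;> norm_num
  rw [← sub_eq_zero, ← Summable.tsum_sub
    (summable_div_pow_succ_of_bounded hβ fun j => hbound _ (plusDigit_eq _))
    (summable_div_pow_succ_of_bounded hβ fun j => hbound _ (minusDigit_eq _))]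
  simp_rw [← sub_div, plusDigit_sub_minusDigit (hd _), mul_div_assoc]
  rw [tsum_mul_left, hzero, mul_zero]

theorem two_addresses_of_pm_zero_general (b1 b2 : ℝ) (hb1 : 1 < b1) (hb2 : 1 < b2)
    (n : ℕ) (c : ℕ → ℝ)
    (hc : ∀ i ≤ n, c i = -1 ∨ c i = 0 ∨ c i = 1)
    (hcn : c n ≠ 0)
    (hP1 : ∑ i ∈ Finset.range (n + 1), c i * b1 ^ i = 0)
    (hP2 : ∑ i ∈ Finset.range (n + 1), c i * b2 ^ i = 0) :
    ∃ a b : ℕ → ℝ,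
      (∀ j : ℕ, a j = -1 ∨ a j = 1) ∧
      (∀ j : ℕ, b j = -1 ∨ b j = 1) ∧
      a 1 ≠ b 1 ∧
      (∑' j : ℕ, a (j + 1) / b1 ^ (j + 1)) = (∑' j : ℕ, b (j + 1) / b1 ^ (j + 1)) ∧
      (∑' j : ℕ, a (j + 1) / b2 ^ (j + 1)) = (∑' j : ℕ, b (j + 1) / b2 ^ (j + 1)) := by
  have hd : ∀ j, periodicCoeffs c n j = -1 ∨ periodicCoeffs c n j = 0 ∨
      periodicCoeffs c n j = 1 := fun j => hc _ (Nat.sub_le _ _)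
  refine ⟨fun j => plusDigit (periodicCoeffs c n (j - 1)),
    fun j => minusDigit (periodicCoeffs c n (j - 1)),
    fun j => plusDigit_eq _, fun j => minusDigit_eq _, ?_, ?_, ?_⟩
  · simpa [periodicCoeffs] using plusDigit_ne_minusDigit (hc n le_rfl) hcn
  · simpa only [Nat.add_sub_cancel] using
      tsum_plusDigit_div_pow_eq hb1 hd (tsum_periodicCoeffs_div_pow_eq_zero hb1 hP1)
  · simpa only [Nat.add_sub_cancel] using
      tsum_plusDigit_div_pow_eq hb2 hd (tsum_periodicCoeffs_div_pow_eq_zero hb2 hP2)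

theorem two_addresses_of_pm_zero (b1 b2 : ℝ) (hb1 : 1 < b1) (hb2 : 1 < b2)
    (hne : b1 ≠ b2) (n : ℕ) (c : ℕ → ℝ)
    (hc : ∀ i ≤ n, c i = -1 ∨ c i = 0 ∨ c i = 1)
    (hcn : c n ≠ 0)
    (hP1 : ∑ i ∈ Finset.range (n + 1), c i * b1 ^ i = 0)
    (hP2 : ∑ i ∈ Finset.range (n + 1), c i * b2 ^ i = 0) :
    ∃ a b : ℕ → ℝ,
      (∀ j : ℕ, a j = -1 ∨ a j = 1) ∧
      (∀ j : ℕ, b j = -1 ∨ b j = 1) ∧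
      a 1 ≠ b 1 ∧
      (∑' j : ℕ, a (j + 1) / b1 ^ (j + 1)) = (∑' j : ℕ, b (j + 1) / b1 ^ (j + 1)) ∧
      (∑' j : ℕ, a (j + 1) / b2 ^ (j + 1)) = (∑' j : ℕ, b (j + 1) / b2 ^ (j + 1)) :=
  two_addresses_of_pm_zero_general b1 b2 hb1 hb2 n c hc hcn hP1 hP2
end

section
/- Let Y be a topological space and f : {0,1,2}^ℕ → Y a continuous map (where {0,1,2}^ℕ has the product topology) such that for every finite word w ∈ {0,1,2}* and every pair of distinct symbols i ≠ j in {0,1,2}, the images of the cylinders [wi] and [wj] under f intersect: f([wi]) ∩ f([wj]) ≠ ∅. Then the image of f is path connected. -/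
/-- The cylinder of infinite sequences over `Fin 3` beginning with the finite word `w`. -/
def cylinder3 (w : List (Fin 3)) : Set (ℕ → Fin 3) :=
  {x | ∀ k : Fin w.length, x k = w.get k}

set_option linter.unusedSectionVars false

namespace OP3

lemma mem_cylinder3 {w : List (Fin 3)} {x : ℕ → Fin 3} :
    x ∈ cylinder3 w ↔ ∀ k, ∀ hk : k < w.length, x k = w[k] := by
  constructor
  · intro hx k hk; exact hx ⟨k, hk⟩
  · intro hx k; exact hx k k.isLt

lemma mem_cyl_ofFn {z : ℕ → Fin 3} {n : ℕ} {x : ℕ → Fin 3} :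
    x ∈ cylinder3 (List.ofFn fun k : Fin n => z k) ↔ ∀ k < n, x k = z k := by
  rw [mem_cylinder3]
  constructor
  · intro hx k hk
    have := hx k (by simpa using hk)
    simpa using this
  · intro hx k hk
    rw [List.getElem_ofFn]
    exact hx k (by simpa using hk)

section Main

variable {Y : Type*} [TopologicalSpace Y] (f : (ℕ → Fin 3) → Y)

/-- Cylinder neighborhood lemma. -/
lemma CNL (hf : Continuous f) {V : Set Y} (hV : IsOpen V) {z : ℕ → Fin 3} (hz : f z ∈ V) :
    ∃ n : ℕ, ∀ x : ℕ → Fin 3, (∀ k < n, x k = z k) → f x ∈ V := by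
  have hopen : IsOpen (f ⁻¹' V) := hV.preimage hf
  rw [isOpen_pi_iff] at hopen
  obtain ⟨I, u, hu, hsub⟩ := hopen z hz
  refine ⟨I.sup id + 1, fun x hx => ?_⟩
  apply hsub
  intro i hi
  have : i < I.sup id + 1 := Nat.lt_succ_of_le (Finset.le_sup (f := id) hi)
  rw [hx i this]
  exact (hu i hi).2

variable (h : ∀ w : List (Fin 3), ∀ i j : Fin 3, i ≠ j →
      (f '' cylinder3 (w ++ [i]) ∩ f '' cylinder3 (w ++ [j])).Nonempty)

/-- Witness pair for neighbouring cylinders. -/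
noncomputable def wit (n : ℕ) (α β : ℕ → Fin 3) (hij : α n ≠ β n) :
    {q : (ℕ → Fin 3) × (ℕ → Fin 3) //
      (∀ k ≤ n, q.1 k = α k) ∧ (∀ k < n, q.2 k = α k) ∧ q.2 n = β n ∧ f q.1 = f q.2} := by
  have hex : ∃ q : (ℕ → Fin 3) × (ℕ → Fin 3),
      (∀ k ≤ n, q.1 k = α k) ∧ (∀ k < n, q.2 k = α k) ∧ q.2 n = β n ∧ f q.1 = f q.2 := by
    obtain ⟨p, ⟨x, hx, hfx⟩, ⟨y, hy, hfy⟩⟩ :=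
      h (List.ofFn fun k : Fin n => α k) (α n) (β n) hij
    rw [mem_cylinder3] at hx hy
    have hlen : (List.ofFn fun k : Fin n => α k).length = n := by simp
    refine ⟨(x, y), ?_, ?_, ?_, hfx.trans hfy.symm⟩
    · intro k hk
      rcases lt_or_eq_of_le hk with hk' | hk'
      · have := hx k (by simp; omega)
        rwa [List.getElem_append_left (by simpa using hk'), List.getElem_ofFn] at this
      · subst hk'
        have := hx k (by simp)
        rwa [List.getElem_append_right (by simp), List.getElem_singleton] at this
    · intro k hk
      have := hy k (by simp; omega)
      rwa [List.getElem_append_left (by simpa using hk), List.getElem_ofFn] at this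
    · have := hy n (by simp)
      rwa [List.getElem_append_right (by simp), List.getElem_singleton] at this
  exact ⟨hex.choose, hex.choose_spec⟩

/-- One subdivision step. -/
noncomputable def child (n : ℕ) (st : (ℕ → Fin 3) × (ℕ → Fin 3)) (d : Bool) :
    (ℕ → Fin 3) × (ℕ → Fin 3) :=
  if hij : st.1 n = st.2 n then (if d then (st.2, st.2) else st)
  else
    let q := (wit f h n st.1 st.2 hij).1
    if d then (q.2, st.2) else (st.1, q.1)

variable (a b : ℕ → Fin 3)

/-- The state sequence along a binary address stream. -/
noncomputable def D (s : ℕ → Bool) : ℕ → (ℕ → Fin 3) × (ℕ → Fin 3)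
  | 0 => (a, b)
  | n + 1 => child f h n (D s n) (s n)

/-- The limit sequence along a binary address stream. -/
noncomputable def U (s : ℕ → Bool) : ℕ → Fin 3 := fun k => (D f h a b s (k + 1)).1 k

lemma child_false_fst (n : ℕ) (st : (ℕ → Fin 3) × (ℕ → Fin 3)) :
    (child f h n st false).1 = st.1 := by
  unfold child
  split <;> simp

lemma child_true_snd (n : ℕ) (st : (ℕ → Fin 3) × (ℕ → Fin 3)) :
    (child f h n st true).2 = st.2 := by
  unfold child
  split <;> simp

lemma child_fst_agree (n : ℕ) (st : (ℕ → Fin 3) × (ℕ → Fin 3)) (d : Bool)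
    (hst : ∀ k < n, st.1 k = st.2 k) :
    ∀ k < n, (child f h n st d).1 k = st.1 k := by
  intro k hk
  unfold child
  split
  · cases d
    · simp
    · simpa using (hst k hk).symm
  · rename_i hij
    cases d
    · simp
    · simpa using (wit f h n st.1 st.2 hij).2.2.1 k hk

lemma child_agree (n : ℕ) (st : (ℕ → Fin 3) × (ℕ → Fin 3)) (d : Bool)
    (hst : ∀ k < n, st.1 k = st.2 k) :
    ∀ k < n + 1, (child f h n st d).1 k = (child f h n st d).2 k := by
  intro k hk
  rcases Nat.lt_succ_iff_lt_or_eq.mp hk with hk' | hk'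
  · unfold child
    split
    · cases d <;> simp [hst k hk']
    · rename_i hij
      obtain ⟨hq1, hq2, hq3, _⟩ := (wit f h n st.1 st.2 hij).2
      cases d
      · simp [hq1 k hk'.le, hst k hk']
      · simp [hq2 k hk', hst k hk']
  · subst hk'
    unfold child
    split
    · rename_i hij
      cases d <;> simp [hij]
    · rename_i hij
      obtain ⟨hq1, hq2, hq3, _⟩ := (wit f h k st.1 st.2 hij).2
      cases d
      · simpa using (hq1 k le_rfl).symm
      · simpa using hq3

lemma D_fst_eq_snd (s : ℕ → Bool) : ∀ n, ∀ k < n, (D f h a b s n).1 k = (D f h a b s n).2 k := by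
  intro n
  induction n with
  | zero => intro k hk; omega
  | succ n ih =>
    have : D f h a b s (n + 1) = child f h n (D f h a b s n) (s n) := rfl
    rw [this]
    exact child_agree f h n _ (s n) ih

lemma U_eq (s : ℕ → Bool) : ∀ n, ∀ k < n, U f h a b s k = (D f h a b s n).1 k := by
  intro n
  induction n with
  | zero => intro k hk; omega
  | succ n ih =>
    intro k hk
    rcases Nat.lt_succ_iff_lt_or_eq.mp hk with hk' | hk'
    · rw [ih k hk']
      exact (child_fst_agree f h n _ (s n) (D_fst_eq_snd f h a b s n) k hk').symm
    · subst hk'; rfl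

lemma D_fst_stable (s : ℕ → Bool) (m : ℕ) :
    ∀ M, m ≤ M → (∀ k, m ≤ k → k < M → s k = false) → (D f h a b s M).1 = (D f h a b s m).1 := by
  intro M
  induction M with
  | zero =>
    intro h1 _
    obtain rfl : m = 0 := Nat.le_zero.mp h1
    rfl
  | succ M ih =>
    intro h1 h2
    rcases Nat.lt_or_ge m (M + 1) with hm | hm
    · have hm' : m ≤ M := by omega
      have hsM : s M = false := h2 M hm' (by omega)
      show (child f h M (D f h a b s M) (s M)).1 = _
      rw [hsM, child_false_fst]
      exact ih hm' (fun k u v => h2 k u (by omega))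
    · obtain rfl : m = M + 1 := by omega
      rfl

lemma D_snd_stable (s : ℕ → Bool) (m : ℕ) :
    ∀ M, m ≤ M → (∀ k, m ≤ k → k < M → s k = true) → (D f h a b s M).2 = (D f h a b s m).2 := by
  intro M
  induction M with
  | zero =>
    intro h1 _
    obtain rfl : m = 0 := Nat.le_zero.mp h1
    rfl
  | succ M ih =>
    intro h1 h2
    rcases Nat.lt_or_ge m (M + 1) with hm | hm
    · have hm' : m ≤ M := by omega
      have hsM : s M = true := h2 M hm' (by omega)
      show (child f h M (D f h a b s M) (s M)).2 = _
      rw [hsM, child_true_snd]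
      exact ih hm' (fun k u v => h2 k u (by omega))
    · obtain rfl : m = M + 1 := by omega
      rfl

lemma U_left_tail (s : ℕ → Bool) (m : ℕ) (hs : ∀ k, m ≤ k → s k = false) :
    U f h a b s = (D f h a b s m).1 := by
  funext k
  rcases Nat.lt_or_ge k m with hk | hk
  · exact U_eq f h a b s m k hk
  · show (D f h a b s (k + 1)).1 k = _
    rw [D_fst_stable f h a b s m (k + 1) (by omega) (fun j h1 _ => hs j h1)]

lemma U_right_tail (s : ℕ → Bool) (m : ℕ) (hs : ∀ k, m ≤ k → s k = true) :
    U f h a b s = (D f h a b s m).2 := by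
  funext k
  rcases Nat.lt_or_ge k m with hk | hk
  · rw [U_eq f h a b s m k hk]
    exact D_fst_eq_snd f h a b s m k hk
  · show (D f h a b s (k + 1)).1 k = _
    rw [D_fst_eq_snd f h a b s (k + 1) k (by omega)]
    rw [D_snd_stable f h a b s m (k + 1) (by omega) (fun j h1 _ => hs j h1)]

lemma U_zero : U f h a b (fun _ => false) = a := by
  rw [U_left_tail f h a b _ 0 (fun _ _ => rfl)]; rfl

lemma U_one : U f h a b (fun _ => true) = b := by
  rw [U_right_tail f h a b _ 0 (fun _ _ => rfl)]; rfl

lemma D_congr (s s' : ℕ → Bool) (n : ℕ) (hss' : ∀ k < n, s k = s' k) :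
    D f h a b s n = D f h a b s' n := by
  induction n with
  | zero => rfl
  | succ n ih =>
    show child f h n (D f h a b s n) (s n) = child f h n (D f h a b s' n) (s' n)
    rw [ih (fun k hk => hss' k (by omega)), hss' n (by omega)]

lemma U_congr (s s' : ℕ → Bool) (n : ℕ) (hss' : ∀ k < n, s k = s' k) :
    ∀ k < n, U f h a b s k = U f h a b s' k := by
  intro k hk
  show (D f h a b s (k + 1)).1 k = (D f h a b s' (k + 1)).1 k
  rw [D_congr f h a b s s' (k + 1) (fun j hj => hss' j (by omega))]

/-- The crucial matching of values at a dyadic point: the `true`-then-all-`false`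
stream and the `false`-then-all-`true` stream have the same `f`-value. -/
lemma crux (s s' : ℕ → Bool) (n : ℕ)
    (hagree : ∀ k < n, s k = s' k)
    (hsn : s n = true) (hs'n : s' n = false)
    (hstail : ∀ k, n < k → s k = false) (hs'tail : ∀ k, n < k → s' k = true) :
    f (U f h a b s) = f (U f h a b s') := by
  have hD : D f h a b s n = D f h a b s' n := D_congr f h a b s s' n hagree
  set st := D f h a b s n with hst
  have hUs : U f h a b s = (D f h a b s (n + 1)).1 :=
    U_left_tail f h a b s (n + 1) (fun k hk => hstail k (by omega))
  have hUs' : U f h a b s' = (D f h a b s' (n + 1)).2 :=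
    U_right_tail f h a b s' (n + 1) (fun k hk => hs'tail k (by omega))
  have hDs : D f h a b s (n + 1) = child f h n st true := by
    show child f h n (D f h a b s n) (s n) = _
    rw [hsn]
  have hDs' : D f h a b s' (n + 1) = child f h n st false := by
    show child f h n (D f h a b s' n) (s' n) = _
    rw [hs'n, ← hD]
  rw [hUs, hUs', hDs, hDs']
  unfold child
  split
  · simp
  · rename_i hij
    obtain ⟨_, _, _, hfq⟩ := (wit f h n st.1 st.2 hij).2
    simpa using hfq.symm


/-! ### Binary digits of a real number -/

noncomputable def dig (t : ℝ) (k : ℕ) : Bool := decide (⌊t * 2 ^ (k + 1)⌋ % 2 = 1)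

lemma two_pow_le {i j : ℕ} (hij : i ≤ j) : (1 : ℝ) / 2 ^ j ≤ 1 / 2 ^ i := by
  apply one_div_le_one_div_of_le (by positivity)
  exact pow_le_pow_right₀ one_le_two hij

lemma floor_stage {n k : ℕ} (hk : k + 1 ≤ n) {M : ℤ} {t : ℝ}
    (h1 : (M : ℝ) / 2 ^ n ≤ t) (h2 : t < ((M : ℝ) + 1) / 2 ^ n) :
    ⌊t * 2 ^ (k + 1)⌋ = ⌊(M : ℝ) / 2 ^ (n - (k + 1))⌋ := by
  have hn' : n - (k + 1) + (k + 1) = n := by omega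
  set n' := n - (k + 1)
  have hpos : (0 : ℝ) < 2 ^ (k + 1) := by positivity
  have hpos' : (0 : ℝ) < 2 ^ n' := by positivity
  have h2n : (2 : ℝ) ^ n = 2 ^ n' * 2 ^ (k + 1) := by rw [← pow_add, hn']
  have hM1 : (M : ℝ) ≤ t * 2 ^ n := (div_le_iff₀ (by positivity)).mp h1
  have hM2 : t * 2 ^ n < (M : ℝ) + 1 := (lt_div_iff₀ (by positivity)).mp h2
  have key1 : (M : ℝ) / 2 ^ n' ≤ t * 2 ^ (k + 1) := by
    rw [div_le_iff₀ hpos']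
    calc (M : ℝ) ≤ t * 2 ^ n := hM1
      _ = t * 2 ^ (k + 1) * 2 ^ n' := by rw [h2n]; ring
  have key2 : t * 2 ^ (k + 1) < ((M : ℝ) + 1) / 2 ^ n' := by
    rw [lt_div_iff₀ hpos']
    calc t * 2 ^ (k + 1) * 2 ^ n' = t * 2 ^ n := by rw [h2n]; ring
      _ < (M : ℝ) + 1 := hM2
  have hq1 : ((⌊(M : ℝ) / 2 ^ n'⌋ : ℤ) : ℝ) ≤ t * 2 ^ (k + 1) :=
    le_trans (Int.floor_le _) key1
  have h3 : (M : ℝ) < ((⌊(M : ℝ) / 2 ^ n'⌋ + 1) * 2 ^ n' : ℤ) := by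
    push_cast
    rw [← div_lt_iff₀ hpos']
    exact Int.lt_floor_add_one _
  have h3' : M < (⌊(M : ℝ) / 2 ^ n'⌋ + 1) * 2 ^ n' := by exact_mod_cast h3
  have h4 : M + 1 ≤ (⌊(M : ℝ) / 2 ^ n'⌋ + 1) * 2 ^ n' := by omega
  have hq2 : t * 2 ^ (k + 1) < ((⌊(M : ℝ) / 2 ^ n'⌋ : ℤ) : ℝ) + 1 := by
    refine lt_of_lt_of_le key2 ?_
    rw [div_le_iff₀ hpos']
    calc ((M : ℝ) + 1) = (((M + 1 : ℤ)) : ℝ) := by push_cast; ring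
      _ ≤ (((⌊(M : ℝ) / 2 ^ n'⌋ + 1) * 2 ^ n' : ℤ) : ℝ) := by exact_mod_cast h4
      _ = (((⌊(M : ℝ) / 2 ^ n'⌋ : ℤ) : ℝ) + 1) * 2 ^ n' := by push_cast; ring
  exact Int.floor_eq_iff.mpr ⟨hq1, hq2⟩

lemma floor_base {k : ℕ} {M : ℤ} {t : ℝ}
    (h1 : (M : ℝ) / 2 ^ (k + 1) ≤ t) (h2 : t < ((M : ℝ) + 1) / 2 ^ (k + 1)) :
    ⌊t * 2 ^ (k + 1)⌋ = M := by
  have := floor_stage (le_refl (k + 1)) h1 h2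
  simpa using this

lemma floor_right {k : ℕ} {B : ℤ} {t u : ℝ} (hB : (B : ℝ) = t * 2 ^ (k + 1))
    (h1 : t ≤ u) (h2 : u < t + 1 / 2 ^ (k + 1)) : ⌊u * 2 ^ (k + 1)⌋ = B := by
  have hpos : (0 : ℝ) < 2 ^ (k + 1) := by positivity
  have ht : (B : ℝ) / 2 ^ (k + 1) = t := by rw [hB]; field_simp
  apply floor_base
  · rw [ht]; exact h1
  · have heq : ((B : ℝ) + 1) / 2 ^ (k + 1) = t + 1 / 2 ^ (k + 1) := by
      rw [← ht]; ring
    rw [heq]; exact h2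

lemma floor_left {k : ℕ} {B : ℤ} {t u : ℝ} (hB : (B : ℝ) = t * 2 ^ (k + 1))
    (h1 : t - 1 / 2 ^ (k + 1) ≤ u) (h2 : u < t) : ⌊u * 2 ^ (k + 1)⌋ = B - 1 := by
  have hpos : (0 : ℝ) < 2 ^ (k + 1) := by positivity
  have ht : t = (B : ℝ) / 2 ^ (k + 1) := by rw [hB]; field_simp
  apply floor_base
  · push_cast
    calc ((B : ℝ) - 1) / 2 ^ (k + 1) = t - 1 / 2 ^ (k + 1) := by rw [ht]; ring
      _ ≤ u := h1
  · push_cast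
    calc u < t := h2
      _ = ((B : ℝ) - 1 + 1) / 2 ^ (k + 1) := by rw [ht]; ring

lemma floor_both {k m n : ℕ} (hkm : k + 1 < m) (hmn : m ≤ n) {A : ℤ} {t u : ℝ}
    (hA : (A : ℝ) = t * 2 ^ m)
    (hnd : ∀ C : ℤ, (C : ℝ) ≠ t * 2 ^ (k + 1))
    (h1 : t - 1 / 2 ^ n ≤ u) (h2 : u < t + 1 / 2 ^ n) :
    ⌊u * 2 ^ (k + 1)⌋ = ⌊t * 2 ^ (k + 1)⌋ := by
  set c := t * 2 ^ (k + 1) with hc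
  set M := ⌊c⌋ with hM
  have hj0 : 1 ≤ m - (k + 1) := by omega
  set j := m - (k + 1) with hj
  have hposj : (0 : ℝ) < 2 ^ j := by positivity
  have hposk : (0 : ℝ) < 2 ^ (k + 1) := by positivity
  have hcj : c * 2 ^ j = (A : ℝ) := by
    rw [hA, hc]
    rw [mul_assoc, ← pow_add]
    congr 2
    omega
  have hMc : (M : ℝ) < c := by
    rcases lt_or_eq_of_le (Int.floor_le c) with h | h
    · exact h
    · exact absurd h (hnd M)
  have hcM : c < (M : ℝ) + 1 := Int.lt_floor_add_one c
  -- lower gap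
  have hgapl : (M : ℝ) + 1 / 2 ^ j ≤ c := by
    have hint : ((A - M * 2 ^ j : ℤ) : ℝ) = (c - M) * 2 ^ j := by
      push_cast; rw [← hcj]; ring
    have hpos0 : (0 : ℝ) < (c - M) * 2 ^ j := by
      apply mul_pos (by linarith) hposj
    have : (0 : ℤ) < A - M * 2 ^ j := by
      have : (0:ℝ) < ((A - M * 2 ^ j : ℤ) : ℝ) := by rw [hint]; exact hpos0
      exact_mod_cast this
    have h1' : (1 : ℤ) ≤ A - M * 2 ^ j := this
    have h2' : (1 : ℝ) ≤ (c - (M:ℝ)) * 2 ^ j := by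
      rw [← hint]; exact_mod_cast h1'
    have h3' : 1 / 2 ^ j ≤ c - (M:ℝ) := (div_le_iff₀ hposj).mpr h2'
    linarith
  -- upper gap
  have hgapu : c + 1 / 2 ^ j ≤ (M : ℝ) + 1 := by
    have hint : (((M + 1) * 2 ^ j - A : ℤ) : ℝ) = ((M : ℝ) + 1 - c) * 2 ^ j := by
      push_cast; rw [← hcj]; ring
    have hpos0 : (0 : ℝ) < ((M : ℝ) + 1 - c) * 2 ^ j := by
      apply mul_pos (by linarith) hposj
    have : (0 : ℤ) < (M + 1) * 2 ^ j - A := by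
      have : (0:ℝ) < (((M + 1) * 2 ^ j - A : ℤ) : ℝ) := by rw [hint]; exact hpos0
      exact_mod_cast this
    have h1' : (1 : ℤ) ≤ (M + 1) * 2 ^ j - A := this
    have h2' : (1 : ℝ) ≤ ((M : ℝ) + 1 - c) * 2 ^ j := by
      rw [← hint]; exact_mod_cast h1'
    have h3' : 1 / 2 ^ j ≤ (M : ℝ) + 1 - c := (div_le_iff₀ hposj).mpr h2'
    linarith
  have hratio : (2 : ℝ) ^ (k + 1) / 2 ^ n ≤ 1 / 2 ^ j := by
    rw [div_le_div_iff₀ (by positivity) hposj, ← pow_add, one_mul]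
    apply pow_le_pow_right₀ one_le_two
    omega
  have hlo : (M : ℝ) ≤ u * 2 ^ (k + 1) := by
    have : u * 2 ^ (k + 1) ≥ (t - 1 / 2 ^ n) * 2 ^ (k + 1) := by
      apply mul_le_mul_of_nonneg_right h1 (le_of_lt hposk)
    have hexp : (t - 1 / 2 ^ n) * 2 ^ (k + 1) = c - 2 ^ (k + 1) / 2 ^ n := by
      rw [hc]; ring
    rw [hexp] at this
    linarith
  have hhi : u * 2 ^ (k + 1) < (M : ℝ) + 1 := by
    have : u * 2 ^ (k + 1) < (t + 1 / 2 ^ n) * 2 ^ (k + 1) := by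
      apply mul_lt_mul_of_pos_right h2 hposk
    have hexp : (t + 1 / 2 ^ n) * 2 ^ (k + 1) = c + 2 ^ (k + 1) / 2 ^ n := by
      rw [hc]; ring
    rw [hexp] at this
    linarith
  exact Int.floor_eq_iff.mpr ⟨hlo, hhi⟩

lemma dig_of_int {k : ℕ} {B : ℤ} {t : ℝ} (hB : (B : ℝ) = t * 2 ^ (k + 1)) :
    dig t k = decide (B % 2 = 1) := by
  unfold dig
  rw [← hB, Int.floor_intCast]

lemma dig_zero (k : ℕ) : dig 0 k = false := by
  simp [dig]



/-! ### The path -/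

noncomputable def gam (t : ℝ) : Y := if 1 ≤ t then f b else f (U f h a b (dig t))

lemma gam_of_lt {u : ℝ} (hu : u < 1) :
    gam f h a b u = f (U f h a b (dig u)) := by
  unfold gam; rw [if_neg (not_le.mpr hu)]

lemma gam_of_ge {u : ℝ} (hu : 1 ≤ u) : gam f h a b u = f b := by
  unfold gam; rw [if_pos hu]

lemma gam_zero : gam f h a b 0 = f a := by
  rw [gam_of_lt f h a b one_pos]
  have hd : dig (0 : ℝ) = fun _ => false := funext dig_zero
  rw [hd, U_zero]

lemma gam_one : gam f h a b 1 = f b := gam_of_ge f h a b le_rfl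

lemma gam_mem_range (t : ℝ) : gam f h a b t ∈ Set.range f := by
  unfold gam; split <;> exact ⟨_, rfl⟩

lemma gam_continuousOn (hf : Continuous f) :
    ContinuousOn (gam f h a b) (Set.Icc 0 1) := by
  intro t ht
  obtain ⟨ht0, ht1⟩ := ht
  rw [ContinuousWithinAt, tendsto_nhds]
  intro V hV hVt
  rw [mem_nhdsWithin]
  rcases eq_or_lt_of_le ht1 with heq | hlt1
  · -- CASE t = 1
    subst heq
    have hb : f b ∈ V := by rwa [gam_of_ge f h a b le_rfl] at hVt
    obtain ⟨n1, hn1⟩ := CNL f hf hV hb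
    have hp1 : (0:ℝ) < 1 / 2 ^ n1 := by positivity
    refine ⟨Set.Ioo (1 - 1 / 2 ^ n1) 2, isOpen_Ioo, ⟨by linarith, by norm_num⟩, ?_⟩
    rintro u ⟨⟨hu1, hu2⟩, hu0, hu1'⟩
    show gam f h a b u ∈ V
    rcases le_or_gt 1 u with hge | hltu
    · rw [gam_of_ge f h a b hge]; exact hb
    · rw [gam_of_lt f h a b hltu]
      apply hn1
      intro k hk
      have hdigu : ∀ j < n1, dig u j = true := by
        intro j hj
        have hB : ((2 ^ (j + 1) : ℤ) : ℝ) = 1 * 2 ^ (j + 1) := by push_cast; ring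
        have hfl := floor_left hB (t := (1:ℝ)) (u := u)
          (by have := two_pow_le (show j + 1 ≤ n1 by omega); linarith) hltu
        unfold dig
        rw [hfl]
        have hdvd : (2 : ℤ) ∣ 2 ^ (j + 1) := dvd_pow_self 2 (Nat.succ_ne_zero j)
        obtain ⟨c, hc⟩ := hdvd
        apply decide_eq_true
        omega
      have := U_congr f h a b (dig u) (fun _ => true) n1 (fun j hj => hdigu j hj) k hk
      rw [this, U_one]
  · -- CASE t < 1
    have hVt' : f (U f h a b (dig t)) ∈ V := by
      rwa [gam_of_lt f h a b hlt1] at hVt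
    obtain ⟨n1, hn1⟩ := CNL f hf hV hVt'
    by_cases hdy : ∃ n : ℕ, ∃ T : ℤ, (T : ℝ) = t * 2 ^ n
    swap
    · -- non-dyadic t
      push_neg at hdy
      set M := ⌊t * 2 ^ n1⌋ with hM
      have hpos : (0:ℝ) < 2 ^ n1 := by positivity
      have hlo : (M : ℝ) / 2 ^ n1 < t := by
        rw [div_lt_iff₀ hpos]
        rcases lt_or_eq_of_le (Int.floor_le (t * 2 ^ n1)) with hcase | hcase
        · exact hcase
        · exact absurd hcase (hdy n1 M)
      have hhi : t < ((M : ℝ) + 1) / 2 ^ n1 := by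
        rw [lt_div_iff₀ hpos, hM]
        exact Int.lt_floor_add_one (t * 2 ^ n1)
      refine ⟨Set.Ioo ((M : ℝ) / 2 ^ n1) (((M : ℝ) + 1) / 2 ^ n1), isOpen_Ioo,
        ⟨hlo, hhi⟩, ?_⟩
      rintro u ⟨⟨hu1, hu2⟩, hu0, hu1'⟩
      show gam f h a b u ∈ V
      have hMlt : M + 1 ≤ 2 ^ n1 := by
        have h5 : (M:ℝ) ≤ t * 2 ^ n1 := Int.floor_le _
        have h6 : t * 2 ^ n1 < 2 ^ n1 := by nlinarith
        have : (M:ℝ) < ((2 ^ n1 : ℤ) : ℝ) := by push_cast; linarith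
        have := lt_of_le_of_lt h5 h6
        have h7 : M < (2:ℤ) ^ n1 := by exact_mod_cast (by push_cast; linarith : (M:ℝ) < ((2:ℤ)^n1 : ℤ))
        omega
      have hult : u < 1 := by
        apply lt_of_lt_of_le hu2
        rw [div_le_one hpos]
        calc (M:ℝ) + 1 = (((M + 1 : ℤ)) : ℝ) := by push_cast; ring
          _ ≤ (((2:ℤ) ^ n1 : ℤ) : ℝ) := by exact_mod_cast hMlt
          _ = 2 ^ n1 := by push_cast; ring
      rw [gam_of_lt f h a b hult]
      apply hn1
      intro k hk
      apply U_congr f h a b (dig u) (dig t) n1 ?_ k hk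
      intro j hj
      unfold dig
      rw [floor_stage (show j + 1 ≤ n1 by omega) hu1.le hu2,
          floor_stage (show j + 1 ≤ n1 by omega) hlo.le hhi]
    · -- dyadic t
      by_cases ht0' : t = 0
      · -- t = 0
        subst ht0'
        refine ⟨Set.Ioo (-1) (1 / 2 ^ n1), isOpen_Ioo, ⟨by norm_num, by positivity⟩, ?_⟩
        rintro u ⟨⟨hu1, hu2⟩, hu0, hu1'⟩
        show gam f h a b u ∈ V
        have hult : u < 1 := by
          apply lt_of_lt_of_le hu2
          calc (1:ℝ) / 2 ^ n1 ≤ 1 / 2 ^ 0 := two_pow_le (Nat.zero_le n1)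
            _ = 1 := by norm_num
        rw [gam_of_lt f h a b hult]
        apply hn1
        intro k hk
        apply U_congr f h a b (dig u) (dig 0) n1 ?_ k hk
        intro j hj
        unfold dig
        have hz : ((0:ℤ):ℝ) / 2 ^ n1 = 0 := by norm_num
        have ho : (((0:ℤ):ℝ) + 1) / 2 ^ n1 = 1 / 2 ^ n1 := by norm_num
        rw [floor_stage (show j + 1 ≤ n1 by omega) (M := 0) (by rw [hz]; exact hu0)
            (by rw [ho]; exact hu2),
          floor_stage (show j + 1 ≤ n1 by omega) (M := 0) (by rw [hz]) (by rw [ho]; positivity)]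
      · -- 0 < t, dyadic
        have htpos : 0 < t := lt_of_le_of_ne ht0 (Ne.symm ht0')
        classical
        set m := Nat.find hdy with hmdef
        obtain ⟨A, hA⟩ : ∃ T : ℤ, (T : ℝ) = t * 2 ^ m := Nat.find_spec hdy
        have hmin : ∀ j, j < m → ∀ C : ℤ, (C : ℝ) ≠ t * 2 ^ j := by
          intro j hj
          have := Nat.find_min hdy hj
          push_neg at this
          exact this
        have hpm : (0:ℝ) < 2 ^ m := by positivity
        have hA0 : 0 < A := by
          have hx : (0:ℝ) < t * 2 ^ m := by positivity
          rw [← hA] at hx; exact_mod_cast hx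
        have hA2 : A < 2 ^ m := by
          have hx : t * 2 ^ m < 2 ^ m := by nlinarith
          rw [← hA] at hx
          exact_mod_cast (by push_cast; linarith : (A:ℝ) < (((2:ℤ) ^ m : ℤ) : ℝ))
        have hm0 : m ≠ 0 := by
          intro h0
          rw [h0] at hA2
          simp at hA2
          omega
        obtain ⟨n0, hn0⟩ : ∃ n0, m = n0 + 1 := ⟨m - 1, by omega⟩
        have hAodd : A % 2 = 1 := by
          rcases Int.even_or_odd A with he | ho
          · obtain ⟨C, hC⟩ := he
            exfalso
            apply hmin n0 (by omega) C
            have hX : (A:ℝ) = 2 * (t * 2 ^ n0) := by rw [hA, hn0]; ring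
            have hC' : (A:ℝ) = 2 * (C:ℝ) := by rw [hC]; push_cast; ring
            linarith
          · exact Int.odd_iff.mp ho
        set ss : ℕ → Bool := fun k => if k + 1 < m then dig t k else decide (m ≤ k) with hss
        have hdig_n0 : dig t n0 = true := by
          have hB : (A : ℝ) = t * 2 ^ (n0 + 1) := by rw [← hn0]; exact hA
          rw [dig_of_int hB]
          simp [hAodd]
        have hdig_tail : ∀ k, n0 < k → dig t k = false := by
          intro k hkk
          have hB : ((A * 2 ^ (k - n0) : ℤ) : ℝ) = t * 2 ^ (k + 1) := by
            push_cast
            rw [hA, hn0, mul_assoc, ← pow_add]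
            congr 2
            omega
          rw [dig_of_int hB]
          have hdvd : (2:ℤ) ∣ 2 ^ (k - n0) := dvd_pow_self 2 (by omega)
          obtain ⟨c, hc⟩ := hdvd
          apply decide_eq_false
          have hAc : A * 2 ^ (k - n0) = 2 * (A * c) := by rw [hc]; ring
          omega
        have hkey : f (U f h a b (dig t)) = f (U f h a b ss) := by
          refine crux f h a b (dig t) ss n0 ?_ hdig_n0 ?_ (fun k hk => hdig_tail k hk) ?_
          · intro k hk
            simp only [hss]
            rw [if_pos (by omega)]
          · simp only [hss]
            rw [if_neg (by omega)]
            exact decide_eq_false (by omega)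
          · intro k hk
            simp only [hss]
            rw [if_neg (by omega)]
            exact decide_eq_true (by omega)
        have hVss : f (U f h a b ss) ∈ V := by rw [← hkey]; exact hVt'
        obtain ⟨n2, hn2⟩ := CNL f hf hV hVss
        set N := max m (max n1 n2) with hN
        have hmN : m ≤ N := le_max_left _ _
        have hn1N : n1 ≤ N := le_trans (le_max_left _ _) (le_max_right _ _)
        have hn2N : n2 ≤ N := le_trans (le_max_right _ _) (le_max_right _ _)
        have hposN : (0:ℝ) < 1 / 2 ^ N := by positivity
        have htup : t + 1 / 2 ^ N ≤ 1 := by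
          have hA1 : (A:ℝ) ≤ 2 ^ m - 1 := by
            have hx : A ≤ 2 ^ m - 1 := by omega
            calc (A:ℝ) ≤ ((2 ^ m - 1 : ℤ) : ℝ) := by exact_mod_cast hx
              _ = 2 ^ m - 1 := by push_cast; ring
          have hx2 : t * 2 ^ m ≤ 2 ^ m - 1 := by rw [← hA]; exact hA1
          have hinv : 1 / 2 ^ m * 2 ^ m = (1:ℝ) := by field_simp
          have h7 := two_pow_le hmN
          nlinarith
        refine ⟨Set.Ioo (t - 1 / 2 ^ N) (t + 1 / 2 ^ N), isOpen_Ioo,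
          ⟨by linarith, by linarith⟩, ?_⟩
        rintro u ⟨⟨hu1, hu2⟩, hu0, hu1'⟩
        show gam f h a b u ∈ V
        have hult : u < 1 := by linarith
        rw [gam_of_lt f h a b hult]
        rcases le_or_gt t u with hle | hltu
        · -- right side
          apply hn1
          intro k hk
          apply U_congr f h a b (dig u) (dig t) n1 ?_ k hk
          intro j hj
          rcases le_or_gt m (j + 1) with hmj | hmj
          · have hB : ((A * 2 ^ (j + 1 - m) : ℤ) : ℝ) = t * 2 ^ (j + 1) := by
              push_cast
              rw [hA, mul_assoc, ← pow_add]
              congr 2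
              omega
            unfold dig
            rw [floor_right hB hle
                (lt_of_lt_of_le hu2 (by have := two_pow_le (show j + 1 ≤ N by omega); linarith)),
              floor_right hB le_rfl (by
                have hp : (0:ℝ) < 1 / 2 ^ (j + 1) := by positivity
                linarith)]
          · unfold dig
            rw [floor_both hmj hmN hA (hmin (j+1) hmj) (by linarith) (by linarith)]
        · -- left side
          apply hn2
          intro k hk
          apply U_congr f h a b (dig u) ss n2 ?_ k hk
          intro j hj
          rcases le_or_gt m (j + 1) with hmj | hmj
          · have hB : ((A * 2 ^ (j + 1 - m) : ℤ) : ℝ) = t * 2 ^ (j + 1) := by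
              push_cast
              rw [hA, mul_assoc, ← pow_add]
              congr 2
              omega
            have hfl := floor_left hB
              (by have := two_pow_le (show j + 1 ≤ N by omega); linarith) hltu
            show dig u j = ss j
            unfold dig
            rw [hfl]
            simp only [hss]
            rw [if_neg (by omega)]
            rcases eq_or_lt_of_le hmj with hmj' | hmj'
            · have hz : j + 1 - m = 0 := by omega
              rw [hz, pow_zero, mul_one]
              rw [decide_eq_false (by omega), decide_eq_false (show ¬ (m ≤ j) by omega)]
            · have hdvd : (2:ℤ) ∣ 2 ^ (j + 1 - m) := dvd_pow_self 2 (by omega)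
              obtain ⟨c, hc⟩ := hdvd
              have hAc : A * 2 ^ (j + 1 - m) = 2 * (A * c) := by rw [hc]; ring
              rw [decide_eq_true (show (A * 2 ^ (j + 1 - m) - 1) % 2 = 1 by omega),
                decide_eq_true (show m ≤ j by omega)]
          · have hfb := floor_both hmj hmN hA (hmin (j+1) hmj) (by linarith) (by linarith)
            show dig u j = ss j
            simp only [hss]
            rw [if_pos hmj]
            unfold dig
            rw [hfb]

end Main

end OP3

theorem image_pathConnected (Y : Type*) [TopologicalSpace Y]
    (f : (ℕ → Fin 3) → Y) (hf : Continuous f)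
    (h : ∀ w : List (Fin 3), ∀ i j : Fin 3, i ≠ j →
      (f '' cylinder3 (w ++ [i]) ∩ f '' cylinder3 (w ++ [j])).Nonempty) :
    IsPathConnected (Set.range f) := by
  classical
  set a : ℕ → Fin 3 := fun _ => 0 with ha
  refine ⟨f a, ⟨a, rfl⟩, ?_⟩
  rintro y ⟨x, rfl⟩
  have hcont : Continuous fun st : unitInterval => OP3.gam f h a x st :=
    continuousOn_iff_continuous_restrict.mp (OP3.gam_continuousOn f h a x hf)
  refine ⟨⟨⟨fun st => OP3.gam f h a x st, hcont⟩, ?_, ?_⟩, ?_⟩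
  · show OP3.gam f h a x ((0 : unitInterval) : ℝ) = f a
    have : ((0 : unitInterval) : ℝ) = 0 := rfl
    rw [this, OP3.gam_zero]
  · show OP3.gam f h a x ((1 : unitInterval) : ℝ) = f x
    have : ((1 : unitInterval) : ℝ) = 1 := rfl
    rw [this, OP3.gam_one]
  · intro st
    exact OP3.gam_mem_range f h a x st
end
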